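/- arXiv:2507.01122 — 4 statements merged into one kernel-verified Lean document; each statement's English description precedes it below -/
import Mathlib

section
/- For any probability distribution p(ab|xy) = Σ_λ q(λ) f(a|x,λ) g(b|y,λ) admitting a local hidden variable model with binary outcomes a,b ∈ {0,1} and binary settings x,y ∈ {0,1}, the CHSH quantity S = E(0,0) + E(0,1) + E(1,0) − E(1,1), where E(x,y) = Σ_{a,b} (−1)^{a+b} p(ab|xy), satisfies |S| ≤ 2. -/
/-!
Each hidden variable `λ` fixes local response functions, whose outcome biases
`A x λ = f(0|x,λ) - f(1|x,λ)` and `B y λ = g(0|y,λ) - g(1|y,λ)` lie in `[-1, 1]`, and the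
correlator factorises as `E(x,y) = ∑_λ q(λ) A x λ * B y λ`. Hence `S` is a `q`-average of
`A₀ (B₀ + B₁) + A₁ (B₀ - B₁)`, which is at most `|B₀ + B₁| + |B₀ - B₁| = 2 max(|B₀|, |B₁|) ≤ 2`
in absolute value.
-/

open Finset

lemma abs_sub_le_one_of_add_eq_one {u v : ℝ} (hu : 0 ≤ u) (hv : 0 ≤ v) (huv : u + v = 1) :
    |u - v| ≤ 1 :=
  abs_le.mpr ⟨by linarith, by linarith⟩

lemma abs_add_add_abs_sub_le_two {b b' : ℝ} (hb : |b| ≤ 1) (hb' : |b'| ≤ 1) :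
    |b + b'| + |b - b'| ≤ 2 := by
  rw [abs_le] at hb hb'
  rcases abs_cases (b + b') with ⟨h₁, _⟩ | ⟨h₁, _⟩ <;>
    rcases abs_cases (b - b') with ⟨h₂, _⟩ | ⟨h₂, _⟩ <;> linarith

lemma abs_chsh_combination_le_two {a a' b b' : ℝ} (ha : |a| ≤ 1) (ha' : |a'| ≤ 1)
    (hb : |b| ≤ 1) (hb' : |b'| ≤ 1) :
    |a * (b + b') + a' * (b - b')| ≤ 2 :=
  calc |a * (b + b') + a' * (b - b')|
      ≤ |a| * |b + b'| + |a'| * |b - b'| := by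
        rw [← abs_mul, ← abs_mul]; exact abs_add_le _ _
    _ ≤ 1 * |b + b'| + 1 * |b - b'| := by gcongr
    _ ≤ 2 := by simpa using abs_add_add_abs_sub_le_two hb hb'

lemma abs_sum_mul_le_of_abs_le {ι : Type*} (s : Finset ι) {w X : ι → ℝ} {c : ℝ}
    (hw₀ : ∀ i ∈ s, 0 ≤ w i) (hw₁ : ∑ i ∈ s, w i = 1) (hX : ∀ i ∈ s, |X i| ≤ c) :
    |∑ i ∈ s, w i * X i| ≤ c := by
  have hmem := (convex_closedBall (0 : ℝ) c).sum_mem hw₀ hw₁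
    fun i hi => mem_closedBall_zero_iff.mpr (hX i hi)
  simpa using hmem

lemma correlator_eq_sum_bias_mul_bias {Λ : Type*} [Fintype Λ] (q : Λ → ℝ)
    (f g : Fin 2 → Λ → ℝ) :
    ∑ a : Fin 2, ∑ b : Fin 2, (-1 : ℝ) ^ (a.val + b.val) * ∑ l, q l * f a l * g b l
      = ∑ l, q l * ((f 0 l - f 1 l) * (g 0 l - g 1 l)) := by
  simp only [pow_add, Fin.sum_univ_two, mul_sum, ← sum_add_distrib]
  refine sum_congr rfl fun l _ => ?_
  simp only [Fin.val_zero, Fin.val_one, pow_zero, pow_one]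
  ring

/-- any correlations admitting a local hidden variable model with
binary outcomes and settings satisfy the CHSH inequality `|S| ≤ 2`. -/
theorem stmt6 {Λ : Type*} [Fintype Λ]
    (q : Λ → ℝ) (f g : Fin 2 → Fin 2 → Λ → ℝ)
    (hq0 : ∀ l, 0 ≤ q l) (hq1 : ∑ l, q l = 1)
    (hf0 : ∀ a x l, 0 ≤ f a x l) (hf1 : ∀ x l, ∑ a, f a x l = 1)
    (hg0 : ∀ b y l, 0 ≤ g b y l) (hg1 : ∀ y l, ∑ b, g b y l = 1)
    (p : Fin 2 → Fin 2 → Fin 2 → Fin 2 → ℝ)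
    (hp : ∀ a b x y, p a b x y = ∑ l, q l * f a x l * g b y l)
    (E : Fin 2 → Fin 2 → ℝ)
    (hE : ∀ x y, E x y = ∑ a : Fin 2, ∑ b : Fin 2, (-1 : ℝ) ^ (a.val + b.val) * p a b x y) :
    |E 0 0 + E 0 1 + E 1 0 - E 1 1| ≤ 2 := by
  set A : Fin 2 → Λ → ℝ := fun x l => f 0 x l - f 1 x l
  set B : Fin 2 → Λ → ℝ := fun y l => g 0 y l - g 1 y l
  have hA : ∀ x l, |A x l| ≤ 1 := fun x l => abs_sub_le_one_of_add_eq_one (hf0 0 x l)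
    (hf0 1 x l) (by simpa [Fin.sum_univ_two] using hf1 x l)
  have hB : ∀ y l, |B y l| ≤ 1 := fun y l => abs_sub_le_one_of_add_eq_one (hg0 0 y l)
    (hg0 1 y l) (by simpa [Fin.sum_univ_two] using hg1 y l)
  have hE' : ∀ x y, E x y = ∑ l, q l * (A x l * B y l) := fun x y => by
    simp only [hE, hp]
    exact correlator_eq_sum_bias_mul_bias q (fun a => f a x) (fun b => g b y)
  have hS : E 0 0 + E 0 1 + E 1 0 - E 1 1
      = ∑ l, q l * (A 0 l * (B 0 l + B 1 l) + A 1 l * (B 0 l - B 1 l)) := by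
    simp only [hE', ← sum_add_distrib, ← sum_sub_distrib]
    exact sum_congr rfl fun l _ => by ring
  rw [hS]
  exact abs_sum_mul_le_of_abs_le _ (fun l _ => hq0 l) hq1
    fun l _ => abs_chsh_combination_le_two (hA 0 l) (hA 1 l) (hB 0 l) (hB 1 l)
end

section
/- With measurements N_{a|x} = (I + (-1)^a n_x·σ)/2 where n_0, n_1, n_2 are the three standard basis vectors of R³, and M_{b|y} = (I + (-1)^b m_y·σ)/2 where m_y ∈ {(1,1,1)/√3, (1,1,-1)/√3, (1,-1,1)/√3, (1,-1,-1)/√3}, the isotropic state ρ_p with p > 1/√3 produces statistics violating the noncontextuality inequality p(01|22) + p(10|03) − p(11|00) + p(11|10) − p(11|12) − p(11|20) + p(11|21) + p(11|22) ≥ 0; i.e., the left-hand side evaluated on Tr[ρ_p(N_{a|x}⊗M_{b|y})] is strictly negative for p > 1/√3. -/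
/-!
For `|Φ⁺⟩` one has `Tr[Φ⁺ (A ⊗ B)] = Tr[Aᵀ B] / 2`, and transposition fixes `σ1`, `σ3` and negates
`σ2`. Hence the isotropic state yields `p(ab|xy) = (1 + (-1)^(a+b) p ⟨n_x, R m_y⟩) / 4` with
`R = diag(1, -1, 1)`. Every pairing `⟨n_x, R m_y⟩` is `±1/√3`, and the eight terms of the inequality
add up to `(1 - √3 p) / 2`, which is negative exactly when `p > 1/√3`.
-/

open Matrix Kronecker BigOperators ComplexOrder

noncomputable section

def σ1 : Matrix (Fin 2) (Fin 2) ℂ := !![0, 1; 1, 0]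
def σ2 : Matrix (Fin 2) (Fin 2) ℂ := !![0, -Complex.I; Complex.I, 0]
def σ3 : Matrix (Fin 2) (Fin 2) ℂ := !![1, 0; 0, -1]

/-- Qubit effect with Bloch vector `v`: `(I + v·σ)/2`. -/
def blochE (v : Fin 3 → ℝ) : Matrix (Fin 2) (Fin 2) ℂ :=
  ((1 : ℝ)/2) • (1 + (v 0 : ℂ) • σ1 + (v 1 : ℂ) • σ2 + (v 2 : ℂ) • σ3)

/-- Projective measurement effect `(I + (-1)^a v·σ)/2`. -/
def blochMeas (v : Fin 3 → ℝ) (a : Fin 2) : Matrix (Fin 2) (Fin 2) ℂ :=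
  blochE (((-1 : ℝ) ^ (a : ℕ)) • v)

/-- Projector onto `|Φ⁺⟩ = (|00⟩+|11⟩)/√2`. -/
def phiPlusProj : Matrix (Fin 2 × Fin 2) (Fin 2 × Fin 2) ℂ :=
  Matrix.of fun i j => if i.1 = i.2 ∧ j.1 = j.2 then (1/2 : ℂ) else 0

/-- Two-qubit isotropic state `ρ_p = p |Φ⁺⟩⟨Φ⁺| + (1-p) I/4`. -/
def rhoIso (p : ℝ) : Matrix (Fin 2 × Fin 2) (Fin 2 × Fin 2) ℂ :=
  (p : ℂ) • phiPlusProj + (((1 - p)/4 : ℝ) : ℂ) • 1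

/-- Octahedron directions (standard basis vectors) for Alice. -/
def nOct : Fin 3 → Fin 3 → ℝ := ![![1,0,0], ![0,1,0], ![0,0,1]]

/-- Cube directions for Bob. -/
def mCube : Fin 4 → Fin 3 → ℝ := fun y =>
  (Real.sqrt 3)⁻¹ • (![![1,1,1], ![1,1,-1], ![1,-1,1], ![1,-1,-1]] y)

/-- Correlations of the isotropic state with octahedron/cube measurements. -/
def corrOC (p : ℝ) (a b : Fin 2) (x : Fin 3) (y : Fin 4) : ℝ :=
  ((rhoIso p * (blochMeas (nOct x) a ⊗ₖ blochMeas (mCube y) b)).trace).re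

theorem trace_phiPlusProj_mul_kronecker (A B : Matrix (Fin 2) (Fin 2) ℂ) :
    (phiPlusProj * (A ⊗ₖ B)).trace = (Aᵀ * B).trace / 2 := by
  simp only [trace, phiPlusProj, one_div, diag_apply, mul_apply, of_apply, kroneckerMap_apply, ite_mul,
    zero_mul, Fintype.sum_prod_type, Fin.sum_univ_two, Fin.isValue, and_true, zero_ne_one, and_false,
    ↓reduceIte, add_zero, one_ne_zero, zero_add, transpose_apply]
  ring

theorem trace_rhoIso_mul_kronecker (p : ℝ) (A B : Matrix (Fin 2) (Fin 2) ℂ) :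
    (rhoIso p * (A ⊗ₖ B)).trace
      = p * (Aᵀ * B).trace / 2 + (1 - p) / 4 * (A.trace * B.trace) := by
  rw [rhoIso, add_mul, trace_add, smul_mul_assoc, smul_mul_assoc, one_mul, trace_smul, trace_smul,
    trace_phiPlusProj_mul_kronecker, trace_kronecker]
  push_cast
  ring

open Complex in
theorem blochE_eq (v : Fin 3 → ℝ) :
    blochE v = !![(1 + (v 2 : ℂ)) / 2, (v 0 - v 1 * I) / 2; (v 0 + v 1 * I) / 2, (1 - v 2) / 2] := by
  ext i j
  fin_cases i <;> fin_cases j <;> simp [blochE, σ1, σ2, σ3] <;> ring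

theorem trace_blochE (u : Fin 3 → ℝ) : (blochE u).trace = 1 := by
  rw [blochE_eq, trace_fin_two_of]
  ring

theorem trace_transpose_blochE_mul_blochE (u v : Fin 3 → ℝ) :
    ((blochE u)ᵀ * blochE v).trace = (1 + (u 0 * v 0 - u 1 * v 1 + u 2 * v 2 : ℝ)) / 2 := by
  rw [blochE_eq, blochE_eq]
  simp only [trace_fin_two, mul_apply, transpose_apply, Fin.sum_univ_two, of_apply, cons_val_zero,
    cons_val_one, cons_val_fin_one]
  push_cast
  linear_combination (u 1 * v 1 / 2 : ℂ) * Complex.I_sq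

theorem trace_rhoIso_mul_kronecker_blochE (p : ℝ) (u v : Fin 3 → ℝ) :
    (rhoIso p * (blochE u ⊗ₖ blochE v)).trace
      = ((1 + p * (u 0 * v 0 - u 1 * v 1 + u 2 * v 2) : ℝ) / 4 : ℝ) := by
  rw [trace_rhoIso_mul_kronecker, trace_transpose_blochE_mul_blochE, trace_blochE, trace_blochE]
  push_cast
  ring

theorem corrOC_eq (p : ℝ) (a b : Fin 2) (x : Fin 3) (y : Fin 4) :
    corrOC p a b x y = (1 + (-1) ^ (a + b : ℕ) * p *
      (nOct x 0 * mCube y 0 - nOct x 1 * mCube y 1 + nOct x 2 * mCube y 2)) / 4 := by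
  rw [corrOC, blochMeas, blochMeas, trace_rhoIso_mul_kronecker_blochE, Complex.ofReal_re]
  simp only [Pi.smul_apply, smul_eq_mul, pow_add]
  ring

theorem stmt7_general (p : ℝ) (hp : 1 / Real.sqrt 3 < p) :
    corrOC p 0 1 2 2 + corrOC p 1 0 0 3 - corrOC p 1 1 0 0 + corrOC p 1 1 1 0
      - corrOC p 1 1 1 2 - corrOC p 1 1 2 0 + corrOC p 1 1 2 1 + corrOC p 1 1 2 2
      < 0 := by
  have hsqrt : Real.sqrt 3 ^ 2 = 3 := Real.sq_sqrt (by norm_num)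
  have hsum : corrOC p 0 1 2 2 + corrOC p 1 0 0 3 - corrOC p 1 1 0 0 + corrOC p 1 1 1 0
      - corrOC p 1 1 1 2 - corrOC p 1 1 2 0 + corrOC p 1 1 2 1 + corrOC p 1 1 2 2
      = (1 - Real.sqrt 3 * p) / 2 := by
    simp only [corrOC_eq, nOct, mCube, Pi.smul_apply, smul_eq_mul, cons_val', cons_val_zero, cons_val_one,
      cons_val, cons_val_fin_one, Fin.isValue, Fin.val_zero, Fin.val_one]
    field_simp
    linear_combination (4 * p) * hsqrt
  have hviolation : 1 < Real.sqrt 3 * p := by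
    rwa [div_lt_iff₀ (by positivity), mul_comm] at hp
  rw [hsum]
  linarith

/-- for `p > 1/√3`, the isotropic state with octahedron/cube
projective measurements violates the noncontextuality inequality
`p(01|22) + p(10|03) − p(11|00) + p(11|10) − p(11|12) − p(11|20) + p(11|21) + p(11|22) ≥ 0`. -/
theorem stmt7 (p : ℝ) (hp1 : p ≤ 1) (hp : 1 / Real.sqrt 3 < p) :
    corrOC p 0 1 2 2 + corrOC p 1 0 0 3 - corrOC p 1 1 0 0 + corrOC p 1 1 1 0
      - corrOC p 1 1 1 2 - corrOC p 1 1 2 0 + corrOC p 1 1 2 1 + corrOC p 1 1 2 2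
      < 0 :=
  stmt7_general p hp
end
end

section
/- The four cube effects M_{b|y} = (I + (-1)^b m_y·σ)/2 with m_y ∈ {(1,1,1)/√3, (1,1,-1)/√3, (1,-1,1)/√3, (1,-1,-1)/√3} satisfy the nontrivial operational identity M_{0|0} + M_{1|1} + M_{1|2} + M_{0|3} = M_{1|0} + M_{0|1} + M_{0|2} + M_{1|3}, which is not a consequence of the normalization identities M_{0|y} + M_{1|y} = I alone. -/
open Matrix Kronecker BigOperators ComplexOrder

noncomputable section

/-- Cube measurement effects `M_{b|y}`. -/
def cubeM (b : Fin 2) (y : Fin 4) : Matrix (Fin 2) (Fin 2) ℂ :=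
  blochMeas (mCube y) b

/-- Coefficients of the nontrivial operational identity among the cube effects. -/
def cubeα : Fin 2 → Fin 4 → ℝ := ![![1, -1, -1, 1], ![-1, 1, 1, -1]]

/-!
Since `M_{0|y} - M_{1|y} = m_y·σ` and `m_y ↦ m_y·σ` is linear, the identity with signs
`cubeα 0 = (1, -1, -1, 1)` amounts to `m_0 - m_1 - m_2 + m_3 = 0`, which holds because the
four vertices lie on one square face of the cube. A combination of normalization relations
weights `M_{0|y}` and `M_{1|y}` equally, whereas `cubeα` weights them with opposite signs.
-/

def pauliDot : (Fin 3 → ℝ) →ₗ[ℝ] Matrix (Fin 2) (Fin 2) ℂ where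
  toFun v := (v 0 : ℂ) • σ1 + (v 1 : ℂ) • σ2 + (v 2 : ℂ) • σ3
  map_add' v w := by simp only [Pi.add_apply, Complex.ofReal_add, add_smul]; abel
  map_smul' c v := by
    simp only [Pi.smul_apply, smul_eq_mul, Complex.ofReal_mul, mul_smul, RingHom.id_apply,
      smul_add, Complex.coe_smul]

theorem blochE_eq_smul_one_add_pauliDot (v : Fin 3 → ℝ) :
    blochE v = ((1 : ℝ) / 2) • (1 + pauliDot v) := by
  simp only [blochE, pauliDot, LinearMap.coe_mk, AddHom.coe_mk, add_assoc]

theorem blochMeas_zero_sub_one (v : Fin 3 → ℝ) :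
    blochMeas v 0 - blochMeas v 1 = pauliDot v := by
  simp only [blochMeas, blochE_eq_smul_one_add_pauliDot, Fin.val_zero, Fin.val_one, pow_zero,
    pow_one, one_smul, neg_one_smul, map_neg]
  module

theorem sum_smul_blochMeas_sub_eq_zero {ι : Type*} [Fintype ι] (c : ι → ℝ) (v : ι → Fin 3 → ℝ)
    (hv : ∑ i, c i • v i = 0) :
    ∑ i, c i • (blochMeas (v i) 0 - blochMeas (v i) 1) = 0 := by
  simp only [blochMeas_zero_sub_one, ← map_smul, ← map_sum, hv, map_zero]

theorem sum_cubeα_smul_mCube : ∑ y, cubeα 0 y • mCube y = 0 := by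
  ext i
  fin_cases i <;> simp [Fin.sum_univ_four, cubeα, mCube]

/-- the cube effects satisfy the nontrivial operational identity
`M_{0|0} + M_{1|1} + M_{1|2} + M_{0|3} = M_{1|0} + M_{0|1} + M_{0|2} + M_{1|3}`,
and this identity is not a linear combination of the normalization relations
`M_{0|y} + M_{1|y} − I = 0` (any such combination has coefficients `α b y = t y`
independent of `b`, with `Σ_y t y = 0`). -/
theorem stmt8 :
    (cubeM 0 0 + cubeM 1 1 + cubeM 1 2 + cubeM 0 3
      = cubeM 1 0 + cubeM 0 1 + cubeM 0 2 + cubeM 1 3)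
    ∧ ¬ ∃ t : Fin 4 → ℝ, (∀ b y, cubeα b y = t y) ∧ ∑ y, t y = 0 := by
  constructor
  · have hface := sum_smul_blochMeas_sub_eq_zero _ _ sum_cubeα_smul_mCube
    simp only [cubeα, cons_val', cons_val_fin_one, cons_val_zero, Fin.sum_univ_four, one_smul,
      cons_val_one, neg_smul, neg_sub, cons_val] at hface
    rw [← sub_eq_zero, ← hface]
    unfold cubeM
    module
  · rintro ⟨t, ht, -⟩
    have hα := (ht 0 0).trans (ht 1 0).symm
    norm_num [cubeα] at hα
end
end

section
/- Suppose p(ab|xy) = Σ_{λ_A,λ_B} q(λ_A,λ_B) f(a|x,λ_A) g(b|y,λ_B) is a local model for correlations from a bipartite state ρ with Alice's POVM set N tomographically complete, and suppose each response function f(a|x,λ_A) takes the form Tr[ρ_{λ_A} N_{a|x}] for some density operators ρ_{λ_A}. Then the steered assemblage σ_{b|y} := Tr_B[(I ⊗ M_{b|y})ρ] on A admits the local-hidden-state decomposition σ_{b|y} = Σ_{λ_A} (Σ_{λ_B} q(λ_A,λ_B) g(b|y,λ_B)) ρ_{λ_A}, hence ρ is B→A unsteerable with respect to the measurement sets N,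 M. -/
open Matrix Kronecker BigOperators ComplexOrder

noncomputable section

/-- Partial trace over the second factor. -/
def ptraceB {dA dB : ℕ} (X : Matrix (Fin dA × Fin dB) (Fin dA × Fin dB) ℂ) :
    Matrix (Fin dA) (Fin dA) ℂ :=
  Matrix.of fun i j => ∑ b, X (i, b) (j, b)

/-!
Tomographic completeness reduces the claimed operator identity to the equality of the numbers
`Tr[σ_{b|y} N_{a|x}]` for every effect `N_{a|x}`, provided both sides are Hermitian. On the left,
`Tr[Tr_B[(I ⊗ M_{b|y}) ρ] N_{a|x}] = Tr[ρ (N_{a|x} ⊗ M_{b|y})] = p(ab|xy)`; on the right the same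
number is produced by the local model, precisely because Alice's response functions are
`Tr[ρ_{λ_A} N_{a|x}]`.
-/

section PartialTrace

variable {dA dB : ℕ}

theorem conjTranspose_ptraceB (X : Matrix (Fin dA × Fin dB) (Fin dA × Fin dB) ℂ) :
    (ptraceB X)ᴴ = ptraceB Xᴴ := by
  ext i j
  simp [ptraceB, star_sum]

theorem ptraceB_one_kronecker_mul_comm (M : Matrix (Fin dB) (Fin dB) ℂ)
    (X : Matrix (Fin dA × Fin dB) (Fin dA × Fin dB) ℂ) :
    ptraceB ((1 ⊗ₖ M) * X) = ptraceB (X * (1 ⊗ₖ M)) := by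
  ext i j
  simp only [ptraceB, mul_apply, kroneckerMap_apply, one_apply, ite_mul, one_mul, zero_mul,
    Fintype.sum_prod_type, Finset.sum_ite_irrel, Finset.sum_const_zero, Finset.sum_ite_eq,
    Finset.mem_univ, ↓reduceIte, of_apply, mul_ite, mul_zero, Finset.sum_ite_eq']
  rw [Finset.sum_comm]
  simp only [mul_comm]

theorem Matrix.IsHermitian.ptraceB_one_kronecker_mul {M : Matrix (Fin dB) (Fin dB) ℂ}
    {X : Matrix (Fin dA × Fin dB) (Fin dA × Fin dB) ℂ} (hM : M.IsHermitian) (hX : X.IsHermitian) :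
    (ptraceB ((1 ⊗ₖ M) * X)).IsHermitian := by
  rw [IsHermitian, conjTranspose_ptraceB, conjTranspose_mul, conjTranspose_kronecker,
    conjTranspose_one, hM.eq, hX.eq, ptraceB_one_kronecker_mul_comm]

theorem trace_ptraceB_mul (X : Matrix (Fin dA × Fin dB) (Fin dA × Fin dB) ℂ)
    (N : Matrix (Fin dA) (Fin dA) ℂ) :
    (ptraceB X * N).trace = (X * (N ⊗ₖ 1)).trace := by
  simp only [trace, ptraceB, diag_apply, mul_apply, of_apply, Finset.sum_mul, kroneckerMap_apply,
    one_apply, mul_ite, mul_one, mul_zero, Fintype.sum_prod_type, Finset.sum_ite_eq',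
    Finset.mem_univ, ↓reduceIte]
  exact Finset.sum_congr rfl fun _ _ => Finset.sum_comm

theorem trace_ptraceB_one_kronecker_mul_mul (M : Matrix (Fin dB) (Fin dB) ℂ)
    (X : Matrix (Fin dA × Fin dB) (Fin dA × Fin dB) ℂ) (N : Matrix (Fin dA) (Fin dA) ℂ) :
    (ptraceB ((1 ⊗ₖ M) * X) * N).trace = (X * (N ⊗ₖ M)).trace := by
  rw [trace_ptraceB_mul, mul_assoc, trace_mul_comm, mul_assoc, ← mul_kronecker_mul, one_mul,
    mul_one]

end PartialTrace

theorem isHermitian_sum_ofReal_smul {n Λ : Type*} [Fintype Λ] (c : Λ → ℝ)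
    {R : Λ → Matrix n n ℂ} (hR : ∀ l, (R l).IsHermitian) :
    (∑ l, (c l : ℂ) • R l).IsHermitian :=
  isHermitian_iff_isSelfAdjoint.2 <| isSelfAdjoint_sum _ fun l _ =>
    ((hR l).smul (Complex.conj_ofReal (c l))).isSelfAdjoint

theorem stmt16_general {dA dB : ℕ} {X Y AO BO ΛA ΛB : Type*}
    [Fintype BO] [Fintype ΛA] [Fintype ΛB]
    (ρ : Matrix (Fin dA × Fin dB) (Fin dA × Fin dB) ℂ)
    (hρ : ρ.PosSemidef)
    (N : X → AO → Matrix (Fin dA) (Fin dA) ℂ)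
    (M : Y → BO → Matrix (Fin dB) (Fin dB) ℂ)
    (hM : ∀ y, (∀ b, (M y b).PosSemidef) ∧ ∑ b, M y b = 1)
    (q : ΛA → ΛB → ℝ)
    (rhoL : ΛA → Matrix (Fin dA) (Fin dA) ℂ)
    (hrhoL : ∀ l, (rhoL l).PosSemidef ∧ (rhoL l).trace = 1)
    (g : BO → Y → ΛB → ℝ)
    (hmodel : ∀ (a : AO) (x : X) (b : BO) (y : Y),
      (ρ * (N x a ⊗ₖ M y b)).trace
        = ∑ l, ∑ u, ((q l u * g b y u : ℝ) : ℂ) * (rhoL l * N x a).trace)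
    (htomo : ∀ Xm Ym : Matrix (Fin dA) (Fin dA) ℂ,
      Xm.IsHermitian → Ym.IsHermitian →
      (∀ (a : AO) (x : X), (Xm * N x a).trace = (Ym * N x a).trace) → Xm = Ym) :
    ∀ (b : BO) (y : Y),
      ptraceB (((1 : Matrix (Fin dA) (Fin dA) ℂ) ⊗ₖ M y b) * ρ)
        = ∑ l, (((∑ u, q l u * g b y u : ℝ)) : ℂ) • rhoL l := by
  intro b y
  refine htomo _ _ (((hM y).1 b).isHermitian.ptraceB_one_kronecker_mul hρ.isHermitian)
    (isHermitian_sum_ofReal_smul _ fun l => (hrhoL l).1.isHermitian) fun a x => ?_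
  rw [trace_ptraceB_one_kronecker_mul_mul, hmodel, Matrix.sum_mul, trace_sum]
  refine Finset.sum_congr rfl fun l _ => ?_
  rw [smul_mul, trace_smul, Complex.ofReal_sum, Finset.sum_smul]
  simp only [smul_eq_mul]

/-- if the correlations of `ρ` admit a local model whose Alice
response functions are of the quantum form `f(a|x,λ_A) = Tr[ρ_{λ_A} N_{a|x}]`,
and Alice's POVM set is tomographically complete, then the steered assemblage
`σ_{b|y} = Tr_B[(I⊗M_{b|y})ρ]` admits the local-hidden-state decomposition
`σ_{b|y} = Σ_{λ_A} (Σ_{λ_B} q(λ_A,λ_B) g(b|y,λ_B)) ρ_{λ_A}`, i.e. `ρ` is B→A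
unsteerable with respect to the measurement sets. -/
theorem stmt16 {dA dB : ℕ} {X Y AO BO ΛA ΛB : Type*}
    [Fintype X] [Fintype Y] [Fintype AO] [Fintype BO] [Fintype ΛA] [Fintype ΛB]
    (ρ : Matrix (Fin dA × Fin dB) (Fin dA × Fin dB) ℂ)
    (hρ : ρ.PosSemidef) (hτ : ρ.trace = 1)
    (N : X → AO → Matrix (Fin dA) (Fin dA) ℂ)
    (M : Y → BO → Matrix (Fin dB) (Fin dB) ℂ)
    (hN : ∀ x, (∀ a, (N x a).PosSemidef) ∧ ∑ a, N x a = 1)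
    (hM : ∀ y, (∀ b, (M y b).PosSemidef) ∧ ∑ b, M y b = 1)
    (q : ΛA → ΛB → ℝ) (hq0 : ∀ l u, 0 ≤ q l u) (hq1 : ∑ l, ∑ u, q l u = 1)
    (rhoL : ΛA → Matrix (Fin dA) (Fin dA) ℂ)
    (hrhoL : ∀ l, (rhoL l).PosSemidef ∧ (rhoL l).trace = 1)
    (g : BO → Y → ΛB → ℝ)
    (hg0 : ∀ b y u, 0 ≤ g b y u) (hg1 : ∀ y u, ∑ b, g b y u = 1)
    (hmodel : ∀ (a : AO) (x : X) (b : BO) (y : Y),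
      (ρ * (N x a ⊗ₖ M y b)).trace
        = ∑ l, ∑ u, ((q l u * g b y u : ℝ) : ℂ) * (rhoL l * N x a).trace)
    (htomo : ∀ Xm Ym : Matrix (Fin dA) (Fin dA) ℂ,
      Xm.IsHermitian → Ym.IsHermitian →
      (∀ (a : AO) (x : X), (Xm * N x a).trace = (Ym * N x a).trace) → Xm = Ym) :
    ∀ (b : BO) (y : Y),
      ptraceB (((1 : Matrix (Fin dA) (Fin dA) ℂ) ⊗ₖ M y b) * ρ)
        = ∑ l, (((∑ u, q l u * g b y u : ℝ)) : ℂ) • rhoL l :=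
  stmt16_general ρ hρ N M hM q rhoL hrhoL g hmodel htomo
end
end
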